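/- Suppose V*(s) = sup_{u ∈ U(s)} { r(s,u) + α ∫ V*(s') Q(ds'|s,u) } with r bounded measurable and α ∈ (0,1), and the supremum attained by a measurable selector. Then the measurized value function V̄* defined by V̄*(ν) := sup over Markov policies {φₜ} of Σₜ αᵗ r̄(νₜ, φₜ) (with νₜ₊₁ = F(νₜ, φₜ), ν₀ = ν) satisfies V̄*(ν) = ∫_S V*(s) dν(s) for every probability measure ν on S; in particular V̄*(δ_s) = V*(s) for every s ∈ S. -/

import Mathlib

/-!
By the optimality equation, for every feasible kernel `φ` and probability measure `ν`,
`r̄(ν, φ) + α ∫ V* dF(ν, φ) ≤ ∫ V* dν`, with equality when `φ` is the optimal selector `f`.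
Along the state laws `νₜ` of a Markov policy the weighted rewards `αᵗ r̄(νₜ, φₜ)` are therefore
bounded by the telescoping terms `αᵗ ∫ V* dνₜ - αᵗ⁺¹ ∫ V* dνₜ₊₁`, whose series sums to `∫ V* dν`
because `V*` is bounded and `α < 1`. So no policy beats `∫ V* dν`, and the stationary policy `f`
attains it.
-/

open MeasureTheory ProbabilityTheory

/-- The measurized (deterministic) transition. -/
noncomputable def measurizedF {S U : Type*} [MeasurableSpace S] [MeasurableSpace U]
    (Q : Kernel (S × U) S) (φ : Kernel S U) (ν : Measure S) : Measure S :=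
  ν.bind (fun s => (φ s).bind (fun u => Q (s, u)))

/-- The measurized reward `r̄(ν, φ)`. -/
noncomputable def measurizedReward {S U : Type*} [MeasurableSpace S] [MeasurableSpace U]
    (r : S × U → ℝ) (φ : Kernel S U) (ν : Measure S) : ℝ :=
  ∫ s, ∫ u, r (s, u) ∂(φ s) ∂ν

/-- Deterministic state-distribution recursion `νₜ₊₁ = F(νₜ, φₜ)`. -/
noncomputable def stateLaw {S U : Type*} [MeasurableSpace S] [MeasurableSpace U]
    (Q : Kernel (S × U) S) (φ : ℕ → Kernel S U) (ν₀ : Measure S) : ℕ → Measure S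
  | 0 => ν₀
  | (t + 1) => measurizedF Q (φ t) (stateLaw Q φ ν₀ t)

section BoundedIntegrals

variable {α : Type*} [MeasurableSpace α] {μ : Measure α} {g : α → ℝ} {C : ℝ}

lemma integrable_of_abs_le [IsFiniteMeasure μ] (hg : Measurable g) (hC : ∀ x, |g x| ≤ C) :
    Integrable g μ :=
  .of_bound hg.aestronglyMeasurable C (ae_of_all _ fun x => (Real.norm_eq_abs _).trans_le (hC x))

lemma abs_integral_le_of_abs_le [IsProbabilityMeasure μ] (hC : ∀ x, |g x| ≤ C) :
    |∫ x, g x ∂μ| ≤ C := by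
  simpa using norm_integral_le_of_norm_le_const (μ := μ) (f := g) (ae_of_all _ hC)

end BoundedIntegrals

lemma MeasureTheory.Measure.integral_kernel_comp {α β : Type*} [MeasurableSpace α]
    [MeasurableSpace β] {μ : Measure α} [SFinite μ] {κ : Kernel α β} [IsSFiniteKernel κ]
    {g : β → ℝ} (hg : Integrable g (κ ∘ₘ μ)) :
    ∫ y, g y ∂(κ ∘ₘ μ) = ∫ x, ∫ y, g y ∂(κ x) ∂μ := by
  rw [Measure.comp_eq_comp_const_apply] at hg ⊢
  rw [Kernel.integral_comp hg]
  simp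

section Measurized

variable {S U : Type*} [MeasurableSpace S] [MeasurableSpace U]

lemma measurizedF_eq_comp_compProd (Q : Kernel (S × U) S) [IsSFiniteKernel Q]
    (φ : Kernel S U) [IsSFiniteKernel φ] (ν : Measure S) [SFinite ν] :
    measurizedF Q φ ν = Q ∘ₘ (ν ⊗ₘ φ) := by
  -- `s ↦ (φ s).bind (Q (s, ·))` is the kernel `snd (φ ⊗ₖ Q)`, so it is measurable
  have hrow : (fun s => (φ s).bind fun u => Q (s, u)) = ⇑(Kernel.snd (φ ⊗ₖ Q)) := by
    ext s A hA
    rw [Measure.bind_apply hA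
        (f := fun u => Q (s, u)) (Q.measurable.comp measurable_prodMk_left).aemeasurable,
      Kernel.snd_apply' _ _ hA, Kernel.compProd_apply (measurable_snd hA)]
    rfl
  ext A hA
  rw [measurizedF, hrow, Measure.bind_apply hA (Kernel.aemeasurable _),
    Measure.bind_apply hA Q.aemeasurable, Measure.lintegral_compProd (Q.measurable_coe hA)]
  refine lintegral_congr fun s => ?_
  rw [Kernel.snd_apply' _ _ hA, Kernel.compProd_apply (measurable_snd hA)]
  rfl

noncomputable def actionValue (Q : Kernel (S × U) S) (r : S × U → ℝ) (α : ℝ) (V : S → ℝ)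
    (p : S × U) : ℝ :=
  r p + α * ∫ s', V s' ∂(Q p)

variable {Q : Kernel (S × U) S} {Uset : S → Set U} {r : S × U → ℝ} {C α : ℝ}
  {V : S → ℝ} {CV : ℝ}

lemma measurable_integral_kernel (hVm : Measurable V) :
    Measurable fun p => ∫ s', V s' ∂(Q p) :=
  (hVm.stronglyMeasurable.integral_kernel (κ := Q)).measurable

lemma measurable_actionValue (hrm : Measurable r) (hVm : Measurable V) :
    Measurable (actionValue Q r α V) :=
  hrm.add (measurable_const.mul (measurable_integral_kernel hVm))

lemma abs_actionValue_le [IsMarkovKernel Q] (hrb : ∀ p, |r p| ≤ C) (hVb : ∀ s, |V s| ≤ CV)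
    (p : S × U) :
    |actionValue Q r α V p| ≤ C + |α| * CV :=
  calc |actionValue Q r α V p| ≤ |r p| + |α| * |∫ s', V s' ∂(Q p)| :=
        (abs_add_le _ _).trans_eq (by rw [abs_mul])
    _ ≤ C + |α| * CV :=
        add_le_add (hrb p) (mul_le_mul_of_nonneg_left (abs_integral_le_of_abs_le hVb)
          (abs_nonneg α))

lemma measurizedReward_add_integral_measurizedF [IsMarkovKernel Q] (hrm : Measurable r)
    (hrb : ∀ p, |r p| ≤ C) (hVm : Measurable V) (hVb : ∀ s, |V s| ≤ CV)
    (φ : Kernel S U) [IsMarkovKernel φ]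
    (ν : Measure S) [IsProbabilityMeasure ν] :
    measurizedReward r φ ν + α * ∫ s, V s ∂(measurizedF Q φ ν)
      = ∫ s, ∫ u, actionValue Q r α V (s, u) ∂(φ s) ∂ν := by
  have hr : Integrable r (ν ⊗ₘ φ) := integrable_of_abs_le hrm hrb
  have hQV : Integrable (fun p => ∫ s', V s' ∂(Q p)) (ν ⊗ₘ φ) :=
    integrable_of_abs_le (measurable_integral_kernel hVm) fun p => abs_integral_le_of_abs_le hVb
  rw [measurizedF_eq_comp_compProd, Measure.integral_kernel_comp (integrable_of_abs_le hVm hVb),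
    measurizedReward, ← Measure.integral_compProd hr, ← integral_const_mul,
    ← integral_add hr (hQV.const_mul α)]
  exact Measure.integral_compProd (hr.add (hQV.const_mul α))

lemma measurizedReward_add_integral_measurizedF_le [IsMarkovKernel Q]
    (hUm : ∀ s, MeasurableSet (Uset s)) (hrm : Measurable r) (hrb : ∀ p, |r p| ≤ C)
    (hVm : Measurable V) (hVb : ∀ s, |V s| ≤ CV)
    (hub : ∀ s, ∀ u ∈ Uset s, actionValue Q r α V (s, u) ≤ V s)
    (φ : Kernel S U) [IsMarkovKernel φ] (hφ : ∀ s, φ s (Uset s) = 1)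
    (ν : Measure S) [IsProbabilityMeasure ν] :
    measurizedReward r φ ν + α * ∫ s, V s ∂(measurizedF Q φ ν) ≤ ∫ s, V s ∂ν := by
  rw [measurizedReward_add_integral_measurizedF hrm hrb hVm hVb]
  have hq := measurable_actionValue (Q := Q) (α := α) hrm hVm
  refine integral_mono (integrable_of_abs_le ?_ fun s => abs_integral_le_of_abs_le
      fun u => abs_actionValue_le hrb hVb (s, u))
    (integrable_of_abs_le hVm hVb) fun s => ?_
  · exact (hq.stronglyMeasurable.integral_kernel_prod_right' (κ := φ)).measurable
  have hfeas : ∀ᵐ u ∂(φ s), u ∈ Uset s := by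
    rw [ae_iff, ← Set.compl_def, prob_compl_eq_zero_iff (hUm s)]
    exact hφ s
  calc ∫ u, actionValue Q r α V (s, u) ∂(φ s) ≤ ∫ _, V s ∂(φ s) :=
        integral_mono_ae (integrable_of_abs_le (hq.comp measurable_prodMk_left)
          fun u => abs_actionValue_le hrb hVb (s, u)) (integrable_const _)
          (hfeas.mono fun u hu => hub s u hu)
    _ = V s := by simp

lemma measurizedReward_add_integral_measurizedF_deterministic [IsMarkovKernel Q]
    (hrm : Measurable r) (hrb : ∀ p, |r p| ≤ C) (hVm : Measurable V) (hVb : ∀ s, |V s| ≤ CV)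
    {f : S → U} (hfm : Measurable f) (hfopt : ∀ s, V s = actionValue Q r α V (s, f s))
    (ν : Measure S) [IsProbabilityMeasure ν] :
    measurizedReward r (Kernel.deterministic f hfm) ν
      + α * ∫ s, V s ∂(measurizedF Q (Kernel.deterministic f hfm) ν) = ∫ s, V s ∂ν := by
  rw [measurizedReward_add_integral_measurizedF hrm hrb hVm hVb]
  refine integral_congr_ae (ae_of_all _ fun s => ?_)
  dsimp only
  rw [Kernel.deterministic_apply, integral_dirac' (fun u => actionValue Q r α V (s, u)) (f s)
    ((measurable_actionValue hrm hVm).comp measurable_prodMk_left).stronglyMeasurable, ← hfopt]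

end Measurized

section DiscountedSums

variable {α : ℝ} (hα0 : 0 ≤ α) (hα1 : α < 1)
include hα0 hα1

lemma summable_pow_mul_of_abs_le {a : ℕ → ℝ} {A : ℝ} (ha : ∀ t, |a t| ≤ A) :
    Summable fun t => α ^ t * a t :=
  .of_norm_bounded ((summable_geometric_of_lt_one hα0 hα1).mul_right A) fun t => by
    rw [norm_mul, norm_pow, Real.norm_of_nonneg hα0]
    exact mul_le_mul_of_nonneg_left (ha t) (pow_nonneg hα0 t)

lemma hasSum_pow_mul_sub_mul_succ {v : ℕ → ℝ} {B : ℝ} (hv : ∀ t, |v t| ≤ B) :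
    HasSum (fun t => α ^ t * (v t - α * v (t + 1))) (v 0) := by
  obtain ⟨a, ha⟩ := summable_pow_mul_of_abs_le hα0 hα1 hv
  have hshift : HasSum (fun t => α ^ (t + 1) * v (t + 1)) (a - v 0) := by
    simpa using (hasSum_nat_add_iff' 1).mpr ha
  have hterm : (fun t => α ^ t * (v t - α * v (t + 1)))
      = fun t => α ^ t * v t - α ^ (t + 1) * v (t + 1) := by
    ext t; ring
  rw [hterm, ← sub_sub_cancel a (v 0)]
  exact ha.sub hshift

lemma tsum_pow_mul_le_of_le_sub {a v : ℕ → ℝ} {A B : ℝ} (ha : ∀ t, |a t| ≤ A)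
    (hv : ∀ t, |v t| ≤ B) (hav : ∀ t, a t ≤ v t - α * v (t + 1)) :
    ∑' t, α ^ t * a t ≤ v 0 :=
  hasSum_le (fun t => mul_le_mul_of_nonneg_left (hav t) (pow_nonneg hα0 t))
    (summable_pow_mul_of_abs_le hα0 hα1 ha).hasSum (hasSum_pow_mul_sub_mul_succ hα0 hα1 hv)

lemma tsum_pow_mul_eq_of_eq_sub {a v : ℕ → ℝ} {B : ℝ} (hv : ∀ t, |v t| ≤ B)
    (hav : ∀ t, a t = v t - α * v (t + 1)) :
    ∑' t, α ^ t * a t = v 0 := by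
  simp_rw [hav]
  exact (hasSum_pow_mul_sub_mul_succ hα0 hα1 hv).tsum_eq

end DiscountedSums

section MeasurizedValue

variable {S U : Type*} [MeasurableSpace S] [MeasurableSpace U] {Q : Kernel (S × U) S}
  [IsMarkovKernel Q] {Uset : S → Set U} {r : S × U → ℝ} {C α : ℝ} {V : S → ℝ} {CV : ℝ}

instance isProbabilityMeasure_measurizedF (φ : Kernel S U) [IsMarkovKernel φ] (ν : Measure S)
    [IsProbabilityMeasure ν] : IsProbabilityMeasure (measurizedF Q φ ν) := by
  rw [measurizedF_eq_comp_compProd]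
  infer_instance

instance isProbabilityMeasure_stateLaw (π : ℕ → Kernel S U) [∀ t, IsMarkovKernel (π t)]
    (ν : Measure S) [IsProbabilityMeasure ν] (t : ℕ) :
    IsProbabilityMeasure (stateLaw Q π ν t) := by
  induction t with
  | zero => assumption
  | succ t _ => exact isProbabilityMeasure_measurizedF (π t) _

lemma abs_measurizedReward_le (hrb : ∀ p, |r p| ≤ C) (φ : Kernel S U) [IsMarkovKernel φ]
    (ν : Measure S) [IsProbabilityMeasure ν] : |measurizedReward r φ ν| ≤ C :=
  abs_integral_le_of_abs_le fun s => abs_integral_le_of_abs_le fun u => hrb (s, u)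

variable (Uset) in
def FeasibleMarkovPolicy : Type _ :=
  {π : ℕ → Kernel S U // (∀ t, IsMarkovKernel (π t)) ∧ ∀ t s, π t s (Uset s) = 1}

variable (Q r α) in
noncomputable def measurizedValue (π : ℕ → Kernel S U) (ν : Measure S) : ℝ :=
  ∑' t, α ^ t * measurizedReward r (π t) (stateLaw Q π ν t)

lemma measurizedValue_le (hUm : ∀ s, MeasurableSet (Uset s)) (hrm : Measurable r)
    (hrb : ∀ p, |r p| ≤ C) (hα0 : 0 ≤ α) (hα1 : α < 1) (hVm : Measurable V)
    (hVb : ∀ s, |V s| ≤ CV) (hub : ∀ s, ∀ u ∈ Uset s, actionValue Q r α V (s, u) ≤ V s)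
    (π : ℕ → Kernel S U) [∀ t, IsMarkovKernel (π t)] (hπ : ∀ t s, π t s (Uset s) = 1)
    (ν : Measure S) [IsProbabilityMeasure ν] :
    measurizedValue Q r α π ν ≤ ∫ s, V s ∂ν :=
  tsum_pow_mul_le_of_le_sub (v := fun t => ∫ s, V s ∂(stateLaw Q π ν t)) hα0 hα1
    (fun t => abs_measurizedReward_le hrb (π t) _) (fun _ => abs_integral_le_of_abs_le hVb)
    fun t => le_sub_iff_add_le.mpr <|
      measurizedReward_add_integral_measurizedF_le hUm hrm hrb hVm hVb hub (π t) (hπ t) _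

lemma measurizedValue_deterministic (hrm : Measurable r) (hrb : ∀ p, |r p| ≤ C) (hα0 : 0 ≤ α)
    (hα1 : α < 1) (hVm : Measurable V) (hVb : ∀ s, |V s| ≤ CV) {f : S → U} (hfm : Measurable f)
    (hfopt : ∀ s, V s = actionValue Q r α V (s, f s)) (ν : Measure S) [IsProbabilityMeasure ν] :
    measurizedValue Q r α (fun _ => Kernel.deterministic f hfm) ν = ∫ s, V s ∂ν :=
  tsum_pow_mul_eq_of_eq_sub
    (v := fun t => ∫ s, V s ∂(stateLaw Q (fun _ => Kernel.deterministic f hfm) ν t)) hα0 hα1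
    (fun _ => abs_integral_le_of_abs_le hVb) fun _ => eq_sub_of_add_eq <|
      measurizedReward_add_integral_measurizedF_deterministic hrm hrb hVm hVb hfm hfopt _

end MeasurizedValue

/-- Suppose `V*` (bounded, measurable) satisfies the discounted
optimality equation with an attaining measurable selector.  Then the measurized
value function — the supremum over feasible Markov policies `{φₜ}` of
`Σₜ αᵗ r̄(νₜ, φₜ)` along the deterministic recursion `νₜ₊₁ = F(νₜ, φₜ)` — equals
`∫ V* dν` for every probability measure `ν`; in particular it equals `V*(s)` at
every Dirac measure `δ_s`. -/
theorem stmt9 {S U : Type*} [MeasurableSpace S] [MeasurableSpace U]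
    (Q : Kernel (S × U) S) [IsMarkovKernel Q]
    (Uset : S → Set U) (hUm : ∀ s, MeasurableSet (Uset s))
    (r : S × U → ℝ) (hrm : Measurable r) (C : ℝ) (hrb : ∀ p, |r p| ≤ C)
    (α : ℝ) (hα0 : 0 < α) (hα1 : α < 1)
    (V : S → ℝ) (hVm : Measurable V) (CV : ℝ) (hVb : ∀ s, |V s| ≤ CV)
    (hub : ∀ s, ∀ u ∈ Uset s, r (s, u) + α * ∫ s', V s' ∂(Q (s, u)) ≤ V s)
    (f : S → U) (hfm : Measurable f) (hff : ∀ s, f s ∈ Uset s)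
    (hfopt : ∀ s, V s = r (s, f s) + α * ∫ s', V s' ∂(Q (s, f s))) :
    (∀ ν : Measure S, IsProbabilityMeasure ν →
      (⨆ π : {π : ℕ → Kernel S U //
          (∀ t, IsMarkovKernel (π t)) ∧ ∀ t s, (π : ℕ → Kernel S U) t s (Uset s) = 1},
        ∑' t : ℕ, α ^ t * measurizedReward r ((π : ℕ → Kernel S U) t)
          (stateLaw Q (π : ℕ → Kernel S U) ν t))
        = ∫ s, V s ∂ν) ∧
    (∀ s : S,
      (⨆ π : {π : ℕ → Kernel S U //
          (∀ t, IsMarkovKernel (π t)) ∧ ∀ t s, (π : ℕ → Kernel S U) t s (Uset s) = 1},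
        ∑' t : ℕ, α ^ t * measurizedReward r ((π : ℕ → Kernel S U) t)
          (stateLaw Q (π : ℕ → Kernel S U) (Measure.dirac s) t))
        = V s) := by
  have hvalue (ν : Measure S) [IsProbabilityMeasure ν] :
      ⨆ π : FeasibleMarkovPolicy Uset, measurizedValue Q r α π.1 ν = ∫ s, V s ∂ν := by
    have hle (π : FeasibleMarkovPolicy Uset) : measurizedValue Q r α π.1 ν ≤ ∫ s, V s ∂ν :=
      have := π.2.1
      measurizedValue_le hUm hrm hrb hα0.le hα1 hVm hVb hub π.1 π.2.2 ν
    let πf : FeasibleMarkovPolicy Uset :=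
      ⟨fun _ => Kernel.deterministic f hfm, fun _ => inferInstance, fun _ s => by
        rw [Kernel.deterministic_apply, Measure.dirac_apply_of_mem (hff s)]⟩
    have : Nonempty (FeasibleMarkovPolicy Uset) := ⟨πf⟩
    exact le_antisymm (ciSup_le hle) (le_ciSup_of_le ⟨_, Set.forall_mem_range.2 hle⟩ πf
      (measurizedValue_deterministic hrm hrb hα0.le hα1 hVm hVb hfm hfopt ν).ge)
  exact ⟨fun ν _ => hvalue ν, fun s =>
    (hvalue (.dirac s)).trans (integral_dirac' V s hVm.stronglyMeasurable)⟩
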